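/- In any algebra (S,*,') satisfying the three axioms, the identity (x * (y''' * y)) * y' = x * y''' holds for all x, y in S. -/

import Mathlib

/-!
Writing `x′` for the unary operation, the key identity is `x′ ⋆ x′′ = x′ ⋆ x`: both sides
arise from `((x′ ⋆ x′′) ⋆ x′) ⋆ x` by re-bracketing with (E3) and collapsing with (E1).
It turns (E1) at `x′` into `x′ ⋆ (x ⋆ x′′′) = x′`, and, applied once more, it lets the `x′′`
in the instance of this at `x′′` be replaced by `x`, giving `x′′′ ⋆ (x ⋆ x′′′′′) = x′′′`.
The theorem is this identity after two uses of (E3).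
-/

namespace TypeTwoOneAlgebra

variable {S : Type*} {m : S → S → S} {i : S → S}

local infixl:70 " ⋆ " => m
local postfix:max "′" => i

theorem mul_inv_mul_inv_inv (E1 : ∀ x, (x ⋆ x′) ⋆ x = x)
    (E3 : ∀ x y z, (x ⋆ y) ⋆ z = x ⋆ (y ⋆ z′′)) (x : S) :
    x ⋆ (x′ ⋆ x′′) = x := by
  rw [← E3, E1]

theorem mul_mul_inv_inv_mul (E3 : ∀ x y z, (x ⋆ y) ⋆ z = x ⋆ (y ⋆ z′′)) (v w u s : S) :
    v ⋆ (w ⋆ (u′′ ⋆ s′′′′)) = v ⋆ (w ⋆ (u ⋆ s′′)′′) :=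
  calc v ⋆ (w ⋆ (u′′ ⋆ s′′′′)) = ((v ⋆ w) ⋆ u) ⋆ s := by rw [E3 v w, E3, E3]
    _ = v ⋆ (w ⋆ (u ⋆ s′′)′′) := by rw [E3, E3]

theorem inv_mul_inv_inv (E1 : ∀ x, (x ⋆ x′) ⋆ x = x)
    (E3 : ∀ x y z, (x ⋆ y) ⋆ z = x ⋆ (y ⋆ z′′)) (x : S) :
    x′ ⋆ x′′ = x′ ⋆ x :=
  calc x′ ⋆ x′′ = x′ ⋆ (x′′ ⋆ (x′′′ ⋆ x′′′′)) := by rw [mul_inv_mul_inv_inv E1 E3]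
    _ = x′ ⋆ (x′′ ⋆ (x′ ⋆ x′′)′′) := mul_mul_inv_inv_mul E3 _ _ _ _
    _ = ((x′ ⋆ x′′) ⋆ x′) ⋆ x := by rw [E3, E3]
    _ = x′ ⋆ x := by rw [E1]

theorem mul_inv_mul_self (E1 : ∀ x, (x ⋆ x′) ⋆ x = x)
    (E3 : ∀ x y z, (x ⋆ y) ⋆ z = x ⋆ (y ⋆ z′′)) (x : S) :
    x ⋆ (x′ ⋆ x) = x := by
  rw [← inv_mul_inv_inv E1 E3, mul_inv_mul_inv_inv E1 E3]

theorem inv_mul_mul_inv_inv_inv (E1 : ∀ x, (x ⋆ x′) ⋆ x = x)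
    (E3 : ∀ x y z, (x ⋆ y) ⋆ z = x ⋆ (y ⋆ z′′)) (x : S) :
    x′ ⋆ (x ⋆ x′′′) = x′ := by
  rw [← E3, ← inv_mul_inv_inv E1 E3, E1]

theorem inv_inv_inv_mul_inv_inv (E1 : ∀ x, (x ⋆ x′) ⋆ x = x)
    (E3 : ∀ x y z, (x ⋆ y) ⋆ z = x ⋆ (y ⋆ z′′)) (x : S) :
    x′′′ ⋆ x′′ = x′′′ ⋆ x :=
  calc x′′′ ⋆ x′′ = x′′′ ⋆ x′′′′ := (inv_mul_inv_inv E1 E3 _).symm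
    _ = x′′′ ⋆ (x′′′′ ⋆ (x′′′′′ ⋆ x′′′′)) := by rw [mul_inv_mul_self E1 E3]
    _ = (x′′′ ⋆ (x′′′′ ⋆ x′′′′′)) ⋆ x := by rw [E3, E3]
    _ = x′′′ ⋆ x := by rw [mul_inv_mul_inv_inv E1 E3]

theorem inv_inv_inv_mul_mul_inv_inv_inv_inv_inv (E1 : ∀ x, (x ⋆ x′) ⋆ x = x)
    (E3 : ∀ x y z, (x ⋆ y) ⋆ z = x ⋆ (y ⋆ z′′)) (x : S) :
    x′′′ ⋆ (x ⋆ x′′′′′) = x′′′ :=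
  calc x′′′ ⋆ (x ⋆ x′′′′′) = (x′′′ ⋆ x′′) ⋆ x′′′ := by
        rw [inv_inv_inv_mul_inv_inv E1 E3, E3]
    _ = x′′′ := by rw [E3, inv_mul_mul_inv_inv_inv E1 E3]

end TypeTwoOneAlgebra

theorem stmt_general (S : Type*) (m : S → S → S) (i : S → S)
    (E1 : ∀ x, m (m x (i x)) x = x)
    (E3 : ∀ x y z, m (m x y) z = m x (m y (i (i z)))) :
    ∀ x y, m (m x (m (i (i (i y))) y)) (i y) = m x (i (i (i y))) := by
  intro x y
  rw [E3, E3, TypeTwoOneAlgebra.inv_inv_inv_mul_mul_inv_inv_inv_inv_inv E1 E3]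

theorem stmt (S : Type*) (m : S → S → S) (i : S → S)
    (E1 : ∀ x, m (m x (i x)) x = x)
    (E2 : ∀ x y, m (m x (i x)) (m (i y) y) = m (m (i y) y) (m x (i x)))
    (E3 : ∀ x y z, m (m x y) z = m x (m y (i (i z)))) :
    ∀ x y, m (m x (m (i (i (i y))) y)) (i y) = m x (i (i (i y))) :=
  stmt_general S m i E1 E3
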